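/- Let H be a finite simple graph on h vertices with exactly d connected components. Then the sum, over all vertex covers C of H, of 2^{comp(H[C])} is at most 3^d · 2^{h−d}, where H[C] denotes the subgraph of H induced by C and comp denotes the number of connected components of a graph (with the convention that the empty graph has 0 components). -/

import Mathlib

/-!
Mark the vertices outside a vertex cover `C` by `none` and give every vertex of `C` the color
`some b`, where `b : Bool` is chosen per component of `H[C]`. The left-hand side counts these
pairs, and distinct pairs give distinct maps `V → Option Bool` under which every edge is
`CoverCompatible`: its ends are not both `none`, and are equal when both are `some`.

Once the color of a vertex is fixed, only two colors are compatible with it on a neighbor.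
Fix a root in every component of `H` and let each other vertex point to a neighbor closer to the
root of its component: a compatible coloring is then determined by the colors of the `d` roots
and one bit at each of the remaining `h - d` vertices.
-/

theorem Quot.card_subtype_out_eq_self {α : Type*} (r : α → α → Prop) :
    Nat.card {a // (Quot.mk r a).out = a} = Nat.card (Quot r) :=
  Nat.card_congr
    { toFun := fun a => Quot.mk r a
      invFun := fun q => ⟨q.out, congrArg Quot.out q.out_eq⟩
      left_inv := fun a => Subtype.ext a.2
      right_inv := fun q => q.out_eq }

namespace SimpleGraph

variable {V : Type*} {G : SimpleGraph V}

theorem Reachable.exists_adj_dist_lt {r v : V} (h : G.Reachable r v) (hne : r ≠ v) :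
    ∃ u, G.Adj u v ∧ G.dist r u < G.dist r v := by
  obtain ⟨p, hp⟩ := h.exists_walk_length_eq_dist
  have hnil : ¬p.Nil := fun hn => hne hn.eq
  refine ⟨p.penultimate, p.adj_penultimate hnil, ?_⟩
  calc G.dist r p.penultimate ≤ p.dropLast.length := dist_le _
    _ < p.length := by rw [← Walk.length_dropLast_add_one hnil]; omega
    _ = G.dist r v := hp

theorem card_relHom_le_of_injOn [Fintype V] {α β : Type*} [Fintype α] [Fintype β]
    (R : α → α → Prop) (enc : α → α → β) (henc : ∀ a, Set.InjOn (enc a) {b | R a b}) :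
    Nat.card (G.Adj →r R) ≤
      Fintype.card α ^ Nat.card G.ConnectedComponent *
        Fintype.card β ^ (Fintype.card V - Nat.card G.ConnectedComponent) := by
  classical
  let root (v : V) : V := (G.connectedComponentMk v).out
  have root_eq_of_adj {u v : V} (h : G.Adj u v) : root u = root v := by
    simp only [root, ConnectedComponent.sound h.reachable]
  have exists_parent (v : V) (hv : root v ≠ v) :
      ∃ u, G.Adj u v ∧ G.dist (root v) u < G.dist (root v) v :=
    (ConnectedComponent.exact (G.connectedComponentMk v).out_eq).exists_adj_dist_lt hv
  choose! parent parent_adj parent_dist using exists_parent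
  let code (g : G.Adj →r R) : (G.ConnectedComponent → α) × ({v // root v ≠ v} → β) :=
    (fun K => g K.out, fun v => enc (g (parent v)) (g v))
  have code_injective : Function.Injective code := by
    intro g g' h
    refine RelHom.ext fun v => ?_
    induction hn : G.dist (root v) v using Nat.strong_induction_on generalizing v with
    | _ n ih =>
      by_cases hv : root v = v
      · rw [← hv]
        exact congrFun (congrArg Prod.fst h) _
      · have hu := parent_adj v hv
        have hparent : g (parent v) = g' (parent v) :=
          ih _ (hn ▸ root_eq_of_adj hu ▸ parent_dist v hv) _ rfl
        have hcode : enc (g (parent v)) (g v) = enc (g' (parent v)) (g' v) :=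
          congrFun (congrArg Prod.snd h) ⟨v, hv⟩
        rw [← hparent] at hcode
        exact henc _ (g.map_rel hu) (hparent ▸ g'.map_rel hu) hcode
  calc Nat.card (G.Adj →r R) ≤ Nat.card ((G.ConnectedComponent → α) × ({v // root v ≠ v} → β)) :=
        Nat.card_le_card_of_injective code code_injective
    _ = _ := by
      have hroots : Fintype.card {v // root v = v} = Nat.card G.ConnectedComponent := by
        rw [← Nat.card_eq_fintype_card]
        exact Quot.card_subtype_out_eq_self _
      rw [Nat.card_prod, Nat.card_fun, Nat.card_fun, Nat.card_eq_fintype_card (α := {v // _}),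
        Fintype.card_subtype_compl, hroots, Nat.card_eq_fintype_card (α := α),
        Nat.card_eq_fintype_card (α := β)]

abbrev CoverCompatible (a b : Option Bool) : Prop :=
  (a.isSome ∨ b.isSome) ∧ (a.isSome → b.isSome → a = b)

theorem coverCompatible_injOn (a : Option Bool) :
    Set.InjOn (fun b => if a.isSome then b.isSome else b == some true)
      {b | CoverCompatible a b} := by
  rintro (_ | _ | _) hb (_ | _ | _) hb' h <;>
    rcases a with _ | _ | _ <;> simp_all [CoverCompatible]

variable (G) in
abbrev ColoredCover :=
  Σ C : {C : Finset V // G.IsVertexCover C}, (G.induce (C : Set V)).ConnectedComponent → Bool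

section Coloring

variable [DecidableEq V] {C : Finset V} (f : (G.induce (C : Set V)).ConnectedComponent → Bool)

def coverColoring (v : V) : Option Bool :=
  if h : v ∈ C then some (f ((G.induce (C : Set V)).connectedComponentMk ⟨v, h⟩)) else none

@[simp]
theorem coverColoring_isSome {v : V} : (coverColoring f v).isSome ↔ v ∈ C := by
  by_cases hv : v ∈ C <;> simp [coverColoring, hv]

theorem coverColoring_of_mem {v : V} (hv : v ∈ C) :
    coverColoring f v = some (f ((G.induce (C : Set V)).connectedComponentMk ⟨v, hv⟩)) :=
  dif_pos hv

theorem coverColoring_compatible (hC : G.IsVertexCover C) {u v : V} (h : G.Adj u v) :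
    CoverCompatible (coverColoring f u) (coverColoring f v) := by
  refine ⟨by simpa using hC h, fun hu hv => ?_⟩
  rw [coverColoring_isSome] at hu hv
  rw [coverColoring_of_mem f hu, coverColoring_of_mem f hv]
  have hadj : (G.induce (C : Set V)).Adj ⟨u, hu⟩ ⟨v, hv⟩ := h
  exact congrArg (some ∘ f) (ConnectedComponent.sound hadj.reachable)

end Coloring

def ColoredCover.toRelHom [DecidableEq V] (x : G.ColoredCover) : G.Adj →r CoverCompatible where
  toFun := coverColoring x.2
  map_rel' := coverColoring_compatible x.2 x.1.2

theorem ColoredCover.toRelHom_injective [DecidableEq V] :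
    Function.Injective (ColoredCover.toRelHom (G := G)) := by
  rintro ⟨⟨C, hC⟩, f⟩ ⟨⟨C', hC'⟩, f'⟩ h
  have hcol (v : V) : coverColoring f v = coverColoring f' v := DFunLike.congr_fun h v
  obtain rfl : C = C' := by
    ext v
    rw [← coverColoring_isSome f, hcol, coverColoring_isSome]
  congr
  funext K
  obtain ⟨⟨v, hv⟩, rfl⟩ := K.exists_rep
  have := hcol v
  rw [coverColoring_of_mem f hv, coverColoring_of_mem f' hv] at this
  exact Option.some_injective _ this

end SimpleGraph

open SimpleGraph in
/-- Let H be a finite simple graph on h vertices with exactly d connected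
components. Then the sum, over all vertex covers C of H, of `2 ^ comp (H[C])` is at most
`3 ^ d · 2 ^ (h - d)`, where `comp` counts connected components (the empty graph has 0
components). -/
theorem stmt_1 {V : Type*} [Fintype V] [DecidableEq V]
    (H : SimpleGraph V) [DecidableRel H.Adj]
    (d : ℕ) (hd : Nat.card H.ConnectedComponent = d) :
    ∑ C ∈ Finset.univ.filter
        (fun C : Finset V => ∀ u v : V, H.Adj u v → u ∈ C ∨ v ∈ C),
      2 ^ Nat.card (H.induce (↑C : Set V)).ConnectedComponent
      ≤ 3 ^ d * 2 ^ (Fintype.card V - d) := by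
  classical
  calc _ = Nat.card H.ColoredCover := by
        rw [Nat.card_sigma, Finset.sum_subtype (F := inferInstance)
          (p := fun C : Finset V => H.IsVertexCover C) _ (fun C => by simp [IsVertexCover])]
        simp
    _ ≤ Nat.card (H.Adj →r CoverCompatible) :=
        Nat.card_le_card_of_injective _ ColoredCover.toRelHom_injective
    _ ≤ 3 ^ d * 2 ^ (Fintype.card V - d) :=
        (card_relHom_le_of_injOn (G := H) CoverCompatible _ coverCompatible_injOn).trans_eq
          (by rw [hd, Fintype.card_option, Fintype.card_bool])
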